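/- Let 𝒢 be an ultragraph and R a unital commutative ring. If the edge set 𝒢¹ is finite, G⁰ ∈ 𝒢⁰, and for each edge e₁ ∈ 𝒢¹ there exists an edge e₂ ∈ 𝒢¹ with s(e₁) ∈ r(e₂), then L_R(𝒢) is epsilon-strongly ℤ-graded with respect to the canonical grading {L_R(𝒢)_m}_{m∈ℤ}. -/

import Mathlib

/-!
For `n > 0` take `ε_n = ∑_{|α| = n} s_α s_α^*`, a finite sum because `𝒢¹` is finite. Paths of
equal length satisfy `s_α^* s_β = δ_{α β} p_{r(α)}`, so `ε_n` fixes `s_σ` from the left whenever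
`|σ| ≥ n` and `s_τ^*` from the right whenever `|τ| ≥ n`; these are exactly the monomials of degree
`n`, resp. `-n`. For `-n < 0` take `p_W`, `W` the union of all ranges, and for degree `0` take
`p_{G⁰}`: a projection `p_B` with `B` containing every source and every range fixes every monomial
`s_σ p_A s_τ^*` from both sides unless `σ = τ = []`, which happens only in degree `0`.
-/

/-- An ultragraph: a source map `src : E → V` and a range map assigning to each
edge a nonempty set of vertices. -/
structure Ultragraph (V : Type) (E : Type) : Type where
  src : E → V
  rng : E → Set V
  rng_nonempty : ∀ e, (rng e).Nonempty

namespace Ultragraph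

variable {V E : Type}

/-- A finite path: a (possibly empty) list of edges with compatible transitions. -/
def IsPath (G : Ultragraph V E) (es : List E) : Prop :=
  es.Chain' fun e f => G.src f ∈ G.rng e

/-- An infinite path. -/
def IsInfinitePath (G : Ultragraph V E) (p : ℕ → E) : Prop :=
  ∀ i : ℕ, G.src (p (i + 1)) ∈ G.rng (p i)

/-- Condition (Y). -/
def ConditionY (G : Ultragraph V E) : Prop :=
  ∀ p : ℕ → E, G.IsInfinitePath p →
    ∃ (k : ℕ) (α : List E) (hα : α ≠ []),
      α.length = k + 1 ∧ G.IsPath α ∧ G.src (p k) ∈ G.rng (α.getLast hα)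

/-- The collection 𝒢⁰ of generalized vertices: the smallest collection of subsets of `V`
containing the singletons and the ranges of edges, closed under finite unions and finite
intersections (the empty set is included for convenience; `p_∅ = 0`). -/
inductive InG0 (G : Ultragraph V E) : Set V → Prop
  | vertex (v : V) : InG0 G {v}
  | range (e : E) : InG0 G (G.rng e)
  | union {A B : Set V} : InG0 G A → InG0 G B → InG0 G (A ∪ B)
  | inter {A B : Set V} : InG0 G A → InG0 G B → InG0 G (A ∩ B)

/-- Generators of the Leavitt path algebra. -/
inductive LPAGen (G : Ultragraph V E) : Type
  | edge : E → LPAGen G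
  | star : E → LPAGen G
  | proj : (A : Set V) → G.InG0 A → LPAGen G

/-- The directed graph `E_𝒢` associated to an ultragraph, viewed again as an ultragraph
whose edge ranges are singletons. -/
def toGraph (G : Ultragraph V E) : Ultragraph V {q : E × V // q.2 ∈ G.rng q.1} where
  src q := G.src q.1.1
  rng q := {q.1.2}
  rng_nonempty q := ⟨q.1.2, rfl⟩

variable (R : Type) [CommRing R] (G : Ultragraph V E)

/-- The free `R`-algebra on the generators. -/
abbrev FA := FreeAlgebra R (LPAGen G)

/-- The generator `g` inside the free algebra. -/
def X (g : LPAGen G) : FA R G := FreeAlgebra.ι R g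

/-- The defining relations of the Leavitt path algebra of an ultragraph. -/
inductive LeavittRel : FA R G → FA R G → Prop
  | proj_empty (h : G.InG0 ∅) : LeavittRel (X R G (.proj ∅ h)) 0
  | proj_mul (A B : Set V) (hA : G.InG0 A) (hB : G.InG0 B) :
      LeavittRel (X R G (.proj A hA) * X R G (.proj B hB))
        (X R G (.proj (A ∩ B) (hA.inter hB)))
  | proj_union (A B : Set V) (hA : G.InG0 A) (hB : G.InG0 B) :
      LeavittRel (X R G (.proj (A ∪ B) (hA.union hB)))
        (X R G (.proj A hA) + X R G (.proj B hB) - X R G (.proj (A ∩ B) (hA.inter hB)))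
  | src_mul (e : E) :
      LeavittRel (X R G (.proj {G.src e} (InG0.vertex (G.src e))) * X R G (.edge e))
        (X R G (.edge e))
  | mul_rng (e : E) :
      LeavittRel (X R G (.edge e) * X R G (.proj (G.rng e) (InG0.range e)))
        (X R G (.edge e))
  | rng_mul_star (e : E) :
      LeavittRel (X R G (.proj (G.rng e) (InG0.range e)) * X R G (.star e))
        (X R G (.star e))
  | star_mul_src (e : E) :
      LeavittRel (X R G (.star e) * X R G (.proj {G.src e} (InG0.vertex (G.src e))))
        (X R G (.star e))
  | star_mul_same (e : E) :
      LeavittRel (X R G (.star e) * X R G (.edge e))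
        (X R G (.proj (G.rng e) (InG0.range e)))
  | star_mul_ne (e f : E) (h : e ≠ f) :
      LeavittRel (X R G (.star e) * X R G (.edge f)) 0
  | ck (v : V) (hfin : {e : E | G.src e = v}.Finite) (hne : {e : E | G.src e = v}.Nonempty) :
      LeavittRel (X R G (.proj {v} (InG0.vertex v)))
        (∑ e ∈ hfin.toFinset, X R G (.edge e) * X R G (.star e))

/-- The (unital) quotient of the free algebra by the Leavitt relations; the Leavitt
path algebra `L_R(𝒢)` sits inside it as the non-unital subalgebra generated by the
generators. -/
abbrev LPABig := RingQuot (LeavittRel R G)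

/-- The image of a generator in the quotient. -/
def gen (g : LPAGen G) : LPABig R G := RingQuot.mkAlgHom R (LeavittRel R G) (X R G g)

/-- `s_e`. -/
def sgen (e : E) : LPABig R G := gen R G (.edge e)

/-- `s_e^*`. -/
def tgen (e : E) : LPABig R G := gen R G (.star e)

/-- `p_A`. -/
def pgen (A : Set V) (hA : G.InG0 A) : LPABig R G := gen R G (.proj A hA)

/-- `s_α` for a finite path `α` (the empty product is `1` in the ambient algebra). -/
def sPath (es : List E) : LPABig R G := (es.map (sgen R G)).prod

/-- `s_β^*` for a finite path `β`. -/
def tPath (es : List E) : LPABig R G := (es.reverse.map (tgen R G)).prod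

/-- The monomial `s_α p_A s_β^*`. -/
def mono (α : List E) (A : Set V) (hA : G.InG0 A) (β : List E) : LPABig R G :=
  sPath R G α * pgen R G A hA * tPath R G β

/-- The `m`-th component of the canonical `ℤ`-grading: all finite `R`-linear combinations
of monomials `s_α p_A s_β^*` with `|α| - |β| = m`. -/
def zComp (m : ℤ) : AddSubgroup (LPABig R G) :=
  AddSubgroup.closure {x | ∃ (l : R) (α β : List E) (A : Set V) (hA : G.InG0 A),
    G.IsPath α ∧ G.IsPath β ∧ (α.length : ℤ) - (β.length : ℤ) = m ∧
    x = l • mono R G α A hA β}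

/-- The element of the free group on the edges determined by a finite path. -/
def pathWord (es : List E) : FreeGroup E := (es.map FreeGroup.of).prod

/-- The `g`-th component of the free-group grading: all finite `R`-linear combinations
of monomials `s_α p_A s_β^*` with `α β⁻¹ = g` in the free group on the edges. -/
def fComp (g : FreeGroup E) : AddSubgroup (LPABig R G) :=
  AddSubgroup.closure {x | ∃ (l : R) (α β : List E) (A : Set V) (hA : G.InG0 A),
    G.IsPath α ∧ G.IsPath β ∧ pathWord α * (pathWord β)⁻¹ = g ∧
    x = l • mono R G α A hA β}

/-- The set of generators inside the quotient. -/
def genSet : Set (LPABig R G) := Set.range (gen R G)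

/-- The Leavitt path algebra `L_R(𝒢)`: the non-unital subalgebra of the quotient
generated by the images of the generators. -/
def LPA : NonUnitalSubalgebra R (LPABig R G) := NonUnitalAlgebra.adjoin R (genSet R G)

/-- `s_e` as an element of `L_R(𝒢)`. -/
def sEl (e : E) : LPA R G :=
  ⟨sgen R G e, NonUnitalAlgebra.subset_adjoin R ⟨LPAGen.edge e, rfl⟩⟩

/-- `s_e^*` as an element of `L_R(𝒢)`. -/
def tEl (e : E) : LPA R G :=
  ⟨tgen R G e, NonUnitalAlgebra.subset_adjoin R ⟨LPAGen.star e, rfl⟩⟩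

/-- `p_A` as an element of `L_R(𝒢)`. -/
def pEl (A : Set V) (hA : G.InG0 A) : LPA R G :=
  ⟨pgen R G A hA, NonUnitalAlgebra.subset_adjoin R ⟨LPAGen.proj A hA, rfl⟩⟩

end Ultragraph

/-- The additive span of the set of products `{a b : a ∈ S, b ∈ T}`. -/
def mulSpan {A : Type} [AddGroup A] [Mul A] (S T : AddSubgroup A) : AddSubgroup A :=
  AddSubgroup.closure {x | ∃ a ∈ S, ∃ b ∈ T, x = a * b}


namespace Ultragraph

variable {V E : Type} {R : Type} [CommRing R] {G : Ultragraph V E}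

lemma pgen_congr {A B : Set V} (h : A = B) (hA : G.InG0 A) :
    pgen R G A hA = pgen R G B (h ▸ hA) := by
  subst h; rfl

lemma pgen_mul_pgen (A B : Set V) (hA : G.InG0 A) (hB : G.InG0 B) :
    pgen R G A hA * pgen R G B hB = pgen R G (A ∩ B) (hA.inter hB) :=
  (map_mul _ _ _).symm.trans (RingQuot.mkAlgHom_rel R (LeavittRel.proj_mul A B hA hB))

lemma pgen_empty (h : G.InG0 ∅) : pgen R G ∅ h = 0 :=
  (RingQuot.mkAlgHom_rel R (LeavittRel.proj_empty h)).trans (map_zero _)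

lemma pgen_union (A B : Set V) (hA : G.InG0 A) (hB : G.InG0 B) :
    pgen R G (A ∪ B) (hA.union hB)
      = pgen R G A hA + pgen R G B hB - pgen R G (A ∩ B) (hA.inter hB) :=
  (RingQuot.mkAlgHom_rel R (LeavittRel.proj_union A B hA hB)).trans
    (by simp only [map_sub, map_add]; rfl)

lemma pgen_src_mul_sgen (e : E) :
    pgen R G {G.src e} (InG0.vertex (G.src e)) * sgen R G e = sgen R G e :=
  (map_mul _ _ _).symm.trans (RingQuot.mkAlgHom_rel R (LeavittRel.src_mul e))

lemma sgen_mul_pgen_rng (e : E) :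
    sgen R G e * pgen R G (G.rng e) (InG0.range e) = sgen R G e :=
  (map_mul _ _ _).symm.trans (RingQuot.mkAlgHom_rel R (LeavittRel.mul_rng e))

lemma pgen_rng_mul_tgen (e : E) :
    pgen R G (G.rng e) (InG0.range e) * tgen R G e = tgen R G e :=
  (map_mul _ _ _).symm.trans (RingQuot.mkAlgHom_rel R (LeavittRel.rng_mul_star e))

lemma tgen_mul_pgen_src (e : E) :
    tgen R G e * pgen R G {G.src e} (InG0.vertex (G.src e)) = tgen R G e :=
  (map_mul _ _ _).symm.trans (RingQuot.mkAlgHom_rel R (LeavittRel.star_mul_src e))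

lemma tgen_mul_sgen (e : E) :
    tgen R G e * sgen R G e = pgen R G (G.rng e) (InG0.range e) :=
  (map_mul _ _ _).symm.trans (RingQuot.mkAlgHom_rel R (LeavittRel.star_mul_same e))

lemma tgen_mul_sgen_of_ne {e f : E} (h : e ≠ f) : tgen R G e * sgen R G f = 0 :=
  ((map_mul _ _ _).symm.trans (RingQuot.mkAlgHom_rel R (LeavittRel.star_mul_ne e f h))).trans
    (map_zero _)

lemma pgen_mul_pgen_eq_left {A B : Set V} (hA : G.InG0 A) (hB : G.InG0 B) (h : A ⊆ B) :
    pgen R G A hA * pgen R G B hB = pgen R G A hA := by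
  rw [pgen_mul_pgen, pgen_congr (Set.inter_eq_left.2 h)]

lemma pgen_mul_pgen_eq_right {A B : Set V} (hA : G.InG0 A) (hB : G.InG0 B) (h : A ⊆ B) :
    pgen R G B hB * pgen R G A hA = pgen R G A hA := by
  rw [pgen_mul_pgen, pgen_congr (Set.inter_eq_right.2 h)]

lemma pgen_mul_self (A : Set V) (hA : G.InG0 A) : pgen R G A hA * pgen R G A hA = pgen R G A hA :=
  pgen_mul_pgen_eq_right hA hA subset_rfl

lemma pgen_mul_comm (A B : Set V) (hA : G.InG0 A) (hB : G.InG0 B) :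
    pgen R G A hA * pgen R G B hB = pgen R G B hB * pgen R G A hA := by
  rw [pgen_mul_pgen, pgen_mul_pgen, pgen_congr (Set.inter_comm A B)]

lemma pgen_mul_sgen_of_mem {B : Set V} (hB : G.InG0 B) {e : E} (h : G.src e ∈ B) :
    pgen R G B hB * sgen R G e = sgen R G e := by
  rw [← pgen_src_mul_sgen e, ← mul_assoc,
    pgen_mul_pgen_eq_right _ _ (Set.singleton_subset_iff.2 h)]

lemma pgen_mul_sgen_of_notMem {B : Set V} (hB : G.InG0 B) {e : E} (h : G.src e ∉ B) :
    pgen R G B hB * sgen R G e = 0 := by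
  rw [← pgen_src_mul_sgen e, ← mul_assoc, pgen_mul_pgen,
    pgen_congr (Set.inter_singleton_eq_empty.2 h), pgen_empty, zero_mul]

lemma sgen_mul_pgen_of_subset {B : Set V} (hB : G.InG0 B) {e : E} (h : G.rng e ⊆ B) :
    sgen R G e * pgen R G B hB = sgen R G e := by
  rw [← sgen_mul_pgen_rng e, mul_assoc, pgen_mul_pgen_eq_left _ _ h]

lemma pgen_mul_tgen_of_subset {B : Set V} (hB : G.InG0 B) {e : E} (h : G.rng e ⊆ B) :
    pgen R G B hB * tgen R G e = tgen R G e := by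
  rw [← pgen_rng_mul_tgen e, ← mul_assoc, pgen_mul_pgen_eq_right _ _ h]

lemma tgen_mul_pgen_of_mem {B : Set V} (hB : G.InG0 B) {e : E} (h : G.src e ∈ B) :
    tgen R G e * pgen R G B hB = tgen R G e := by
  rw [← tgen_mul_pgen_src e, mul_assoc,
    pgen_mul_pgen_eq_left _ _ (Set.singleton_subset_iff.2 h)]

@[simp] lemma isPath_nil : G.IsPath [] := List.isChain_nil

@[simp] lemma sPath_nil : sPath R G ([] : List E) = 1 := rfl

@[simp] lemma tPath_nil : tPath R G ([] : List E) = 1 := rfl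

lemma sPath_cons (e : E) (l : List E) : sPath R G (e :: l) = sgen R G e * sPath R G l := by
  simp [sPath]

lemma tPath_cons (e : E) (l : List E) : tPath R G (e :: l) = tPath R G l * tgen R G e := by
  simp [tPath]

lemma sPath_append (a b : List E) : sPath R G (a ++ b) = sPath R G a * sPath R G b := by
  simp [sPath]

lemma tPath_append (a b : List E) : tPath R G (a ++ b) = tPath R G b * tPath R G a := by
  simp [tPath]

variable (R G) in
def pLast (l : List E) : LPABig R G :=
  l.getLast?.elim 1 fun e => pgen R G (G.rng e) (InG0.range e)

@[simp] lemma pLast_nil : pLast R G ([] : List E) = 1 := rfl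

@[simp] lemma pLast_singleton (e : E) : pLast R G [e] = pgen R G (G.rng e) (InG0.range e) := rfl

lemma pLast_cons_cons (e f : E) (l : List E) : pLast R G (e :: f :: l) = pLast R G (f :: l) := by
  simp [pLast]

lemma pLast_concat (l : List E) (e : E) :
    pLast R G (l ++ [e]) = pgen R G (G.rng e) (InG0.range e) := by
  simp [pLast]

lemma sPath_mul_pLast (δ : List E) : sPath R G δ * pLast R G δ = sPath R G δ := by
  induction δ with
  | nil => simp
  | cons f δ ih =>
    cases δ with
    | nil => simpa [sPath_cons] using sgen_mul_pgen_rng (R := R) (G := G) f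
    | cons g t => rw [pLast_cons_cons, sPath_cons, mul_assoc, ih]

lemma pLast_mul_tPath (δ : List E) : pLast R G δ * tPath R G δ = tPath R G δ := by
  induction δ with
  | nil => simp
  | cons f δ ih =>
    cases δ with
    | nil => simpa [tPath_cons] using pgen_rng_mul_tgen (R := R) (G := G) f
    | cons g t => rw [pLast_cons_cons, tPath_cons, ← mul_assoc, ih]

lemma tPath_mul_sPath_self {δ : List E} (hδ : G.IsPath δ) :
    tPath R G δ * sPath R G δ = pLast R G δ := by
  induction δ with
  | nil => simp
  | cons f δ ih =>
    rw [tPath_cons, sPath_cons, mul_assoc, ← mul_assoc (tgen R G f), tgen_mul_sgen]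
    cases δ with
    | nil => simp
    | cons g t =>
      obtain ⟨hfg, hδ⟩ := List.isChain_cons_cons.1 hδ
      rw [sPath_cons, ← mul_assoc (pgen _ _ _ _), pgen_mul_sgen_of_mem _ hfg, ← sPath_cons, ih hδ,
        pLast_cons_cons]

lemma tPath_mul_sPath_of_ne {α δ : List E} (hlen : α.length = δ.length) (hδ : G.IsPath δ)
    (hne : α ≠ δ) : tPath R G α * sPath R G δ = 0 := by
  induction α generalizing δ with
  | nil => cases δ <;> simp_all
  | cons e α ih =>
    cases δ with
    | nil => simp at hlen
    | cons f δ =>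
      rw [tPath_cons, sPath_cons, mul_assoc, ← mul_assoc (tgen R G e)]
      obtain rfl | hef := eq_or_ne e f
      · have hne : α ≠ δ := fun h => hne (h ▸ rfl)
        rw [tgen_mul_sgen]
        cases δ with
        | nil => simp_all
        | cons g t =>
          obtain ⟨heg, hδ⟩ := List.isChain_cons_cons.1 hδ
          rw [sPath_cons, ← mul_assoc (pgen _ _ _ _), pgen_mul_sgen_of_mem _ heg, ← sPath_cons,
            ih (by simpa using hlen) hδ hne]
      · rw [tgen_mul_sgen_of_ne hef, zero_mul, mul_zero]

section Covering

variable {B : Set V} (hB : G.InG0 B)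
include hB

lemma pgen_mul_sPath (hsB : ∀ e, G.src e ∈ B) {σ : List E} (hσ : σ ≠ []) :
    pgen R G B hB * sPath R G σ = sPath R G σ := by
  obtain ⟨e, σ, rfl⟩ := List.exists_cons_of_ne_nil hσ
  rw [sPath_cons, ← mul_assoc, pgen_mul_sgen_of_mem _ (hsB e)]

lemma tPath_mul_pgen (hsB : ∀ e, G.src e ∈ B) {τ : List E} (hτ : τ ≠ []) :
    tPath R G τ * pgen R G B hB = tPath R G τ := by
  obtain ⟨e, τ, rfl⟩ := List.exists_cons_of_ne_nil hτ
  rw [tPath_cons, mul_assoc, tgen_mul_pgen_of_mem _ (hsB e)]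

lemma sPath_mul_pgen (hrB : ∀ e, G.rng e ⊆ B) {σ : List E} (hσ : σ ≠ []) :
    sPath R G σ * pgen R G B hB = sPath R G σ := by
  obtain ⟨σ, e, rfl⟩ := σ.eq_nil_or_concat'.resolve_left hσ
  rw [sPath_append, mul_assoc, sPath_cons, sPath_nil, mul_one, sgen_mul_pgen_of_subset _ (hrB e)]

lemma pgen_mul_tPath (hrB : ∀ e, G.rng e ⊆ B) {τ : List E} (hτ : τ ≠ []) :
    pgen R G B hB * tPath R G τ = tPath R G τ := by
  obtain ⟨τ, e, rfl⟩ := τ.eq_nil_or_concat'.resolve_left hτ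
  rw [tPath_append, ← mul_assoc, tPath_cons, tPath_nil, one_mul, pgen_mul_tgen_of_subset _ (hrB e)]

variable (hsB : ∀ e, G.src e ∈ B) (hrB : ∀ e, G.rng e ⊆ B)
include hsB hrB

lemma pgen_mul_mono {σ τ : List E} {A : Set V} (hA : G.InG0 A) (h : σ = [] → τ = [] → A ⊆ B) :
    pgen R G B hB * mono R G σ A hA τ = mono R G σ A hA τ := by
  rcases eq_or_ne σ [] with rfl | hσ
  · rcases eq_or_ne τ [] with rfl | hτ
    · simp [mono, pgen_mul_pgen_eq_right _ _ (h rfl rfl)]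
    · rw [mono, sPath_nil, one_mul, ← mul_assoc, pgen_mul_comm, mul_assoc,
        pgen_mul_tPath hB hrB hτ]
  · rw [mono, mul_assoc, ← mul_assoc (pgen R G B hB), pgen_mul_sPath hB hsB hσ]

lemma mono_mul_pgen {σ τ : List E} {A : Set V} (hA : G.InG0 A) (h : σ = [] → τ = [] → A ⊆ B) :
    mono R G σ A hA τ * pgen R G B hB = mono R G σ A hA τ := by
  rcases eq_or_ne τ [] with rfl | hτ
  · rcases eq_or_ne σ [] with rfl | hσ
    · simp [mono, pgen_mul_pgen_eq_left _ _ (h rfl rfl)]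
    · rw [mono, tPath_nil, mul_one, mul_assoc, pgen_mul_comm, ← mul_assoc,
        sPath_mul_pgen hB hrB hσ]
  · rw [mono, mul_assoc, tPath_mul_pgen hB hsB hτ]

end Covering

lemma mul_mem_mulSpan {S T : AddSubgroup (LPABig R G)} {a b : LPABig R G} (ha : a ∈ S)
    (hb : b ∈ T) : a * b ∈ mulSpan S T :=
  AddSubgroup.subset_closure ⟨a, ha, b, hb, rfl⟩

lemma smul_mono_mem_zComp (l : R) {α β : List E} {A : Set V} (hA : G.InG0 A) (hα : G.IsPath α)
    (hβ : G.IsPath β) : l • mono R G α A hA β ∈ zComp R G (α.length - β.length) :=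
  AddSubgroup.subset_closure ⟨l, α, β, A, hA, hα, hβ, rfl, rfl⟩

lemma mono_mem_zComp {α β : List E} {A : Set V} (hA : G.InG0 A) (hα : G.IsPath α)
    (hβ : G.IsPath β) {m : ℤ} (hm : (α.length : ℤ) - β.length = m) :
    mono R G α A hA β ∈ zComp R G m := by
  simpa [hm] using smul_mono_mem_zComp (1 : R) hA hα hβ

lemma mul_eq_right_of_mem_zComp {ε t : LPABig R G} {m : ℤ}
    (h : ∀ (α β : List E) (A : Set V) (hA : G.InG0 A), G.IsPath α → G.IsPath β →
      (α.length : ℤ) - β.length = m → ε * mono R G α A hA β = mono R G α A hA β)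
    (ht : t ∈ zComp R G m) : ε * t = t := by
  refine AddMonoidHom.eqOn_closure (f := AddMonoidHom.mulLeft ε) (g := AddMonoidHom.id _) ?_ ht
  rintro _ ⟨l, α, β, A, hA, hα, hβ, hm, rfl⟩
  simp [h α β A hA hα hβ hm]

lemma mul_eq_left_of_mem_zComp {ε t : LPABig R G} {m : ℤ}
    (h : ∀ (α β : List E) (A : Set V) (hA : G.InG0 A), G.IsPath α → G.IsPath β →
      (α.length : ℤ) - β.length = m → mono R G α A hA β * ε = mono R G α A hA β)
    (ht : t ∈ zComp R G m) : t * ε = t := by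
  refine AddMonoidHom.eqOn_closure (f := AddMonoidHom.mulRight ε) (g := AddMonoidHom.id _) ?_ ht
  rintro _ ⟨l, α, β, A, hA, hα, hβ, hm, rfl⟩
  simp [h α β A hA hα hβ hm]

lemma pgen_mul_mem_zComp {B : Set V} (hB : G.InG0 B) {m : ℤ} {t : LPABig R G}
    (ht : t ∈ zComp R G m) : pgen R G B hB * t ∈ zComp R G m := by
  refine (AddSubgroup.closure_le ((zComp R G m).comap (AddMonoidHom.mulLeft _))).2 ?_ ht
  rintro _ ⟨l, σ, τ, A, hA, hσ, hτ, rfl, rfl⟩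
  simp only [SetLike.mem_coe, AddSubgroup.mem_comap, AddMonoidHom.coe_mulLeft, mul_smul_comm]
  cases σ with
  | nil =>
    have hmono : pgen R G B hB * mono R G [] A hA τ = mono R G [] (B ∩ A) (hB.inter hA) τ := by
      simp only [mono, sPath_nil, one_mul, ← mul_assoc, pgen_mul_pgen]
    simpa [hmono] using smul_mono_mem_zComp l (hB.inter hA) isPath_nil hτ
  | cons e σ =>
    by_cases he : G.src e ∈ B
    · have hmono : pgen R G B hB * mono R G (e :: σ) A hA τ = mono R G (e :: σ) A hA τ := by
        simp only [mono, sPath_cons, ← mul_assoc, pgen_mul_sgen_of_mem hB he]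
      rw [hmono]
      exact smul_mono_mem_zComp l hA hσ hτ
    · have hmono : pgen R G B hB * mono R G (e :: σ) A hA τ = 0 := by
        simp only [mono, sPath_cons, ← mul_assoc, pgen_mul_sgen_of_notMem hB he, zero_mul]
      simp [hmono]

lemma pgen_mul_mem_mulSpan {B : Set V} (hB : G.InG0 B) {m m' : ℤ} {x : LPABig R G}
    (hx : x ∈ mulSpan (zComp R G m) (zComp R G m')) :
    pgen R G B hB * x ∈ mulSpan (zComp R G m) (zComp R G m') := by
  refine (AddSubgroup.closure_le ((mulSpan _ _).comap (AddMonoidHom.mulLeft _))).2 ?_ hx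
  rintro _ ⟨a, ha, b, hb, rfl⟩
  simpa only [SetLike.mem_coe, AddSubgroup.mem_comap, AddMonoidHom.coe_mulLeft, ← mul_assoc]
    using mul_mem_mulSpan (pgen_mul_mem_zComp hB ha) hb

lemma zComp_eq_bot [IsEmpty E] {m : ℤ} (hm : m ≠ 0) : zComp R G m = ⊥ := by
  refine AddSubgroup.closure_eq_bot_iff.2 ?_
  rintro _ ⟨l, _ | ⟨e, _⟩, _ | ⟨f, _⟩, A, hA, -, -, hd, rfl⟩
  · exact absurd hd.symm (by simpa using hm)
  all_goals exact isEmptyElim ‹E›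

variable (R G) in
/-- Everything the epsilon-strong condition asks of `ε_m`: the condition `t ε_m = t` comes from
its instance at `-m`. -/
def IsEpsilonUnit (m : ℤ) (ε : LPABig R G) : Prop :=
  ε ∈ mulSpan (zComp R G m) (zComp R G (-m)) ∧ (∀ t ∈ zComp R G m, ε * t = t) ∧
    ∀ t ∈ zComp R G (-m), t * ε = t

lemma isEpsilonUnit_zero (hG0 : G.InG0 Set.univ) :
    IsEpsilonUnit R G 0 (pgen R G Set.univ hG0) := by
  have hmem : pgen R G Set.univ hG0 ∈ zComp R G 0 := by
    simpa [mono] using mono_mem_zComp (R := R) hG0 isPath_nil isPath_nil (by simp)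
  refine ⟨?_, fun t ht => mul_eq_right_of_mem_zComp (fun α β A hA _ _ _ => ?_) ht,
    fun t ht => mul_eq_left_of_mem_zComp (fun α β A hA _ _ _ => ?_) ht⟩
  · rw [← pgen_mul_self]
    exact mul_mem_mulSpan hmem (by simpa using hmem)
  · exact pgen_mul_mono hG0 (fun _ => trivial) (fun _ => Set.subset_univ _) hA
      fun _ _ => Set.subset_univ _
  · exact mono_mul_pgen hG0 (fun _ => trivial) (fun _ => Set.subset_univ _) hA
      fun _ _ => Set.subset_univ _

lemma isEpsilonUnit_pgen {m : ℤ} (hm : m ≠ 0) {B : Set V} (hB : G.InG0 B)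
    (hsB : ∀ e, G.src e ∈ B) (hrB : ∀ e, G.rng e ⊆ B)
    (hmem : pgen R G B hB ∈ mulSpan (zComp R G m) (zComp R G (-m))) :
    IsEpsilonUnit R G m (pgen R G B hB) := by
  refine ⟨hmem, fun t ht => mul_eq_right_of_mem_zComp (fun α β A hA _ _ hd => ?_) ht,
    fun t ht => mul_eq_left_of_mem_zComp (fun α β A hA _ _ hd => ?_) ht⟩
  · exact pgen_mul_mono hB hsB hrB hA fun hα hβ => absurd (by simpa [hα, hβ] using hd.symm) hm
  · exact mono_mul_pgen hB hsB hrB hA fun hα hβ => absurd (by simpa [hα, hβ] using hd.symm) hm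

lemma exists_isPath_pLast_eq (hsrc : ∀ e₁ : E, ∃ e₂ : E, G.src e₁ ∈ G.rng e₂) (e : E) (n : ℕ) :
    ∃ δ : List E, δ.length = n + 1 ∧ G.IsPath δ ∧
      pLast R G δ = pgen R G (G.rng e) (InG0.range e) := by
  suffices ∀ n, ∃ f δ, δ.length = n ∧ G.IsPath (f :: δ) ∧
      pLast R G (f :: δ) = pgen R G (G.rng e) (InG0.range e) by
    obtain ⟨f, δ, hlen, hpath, hlast⟩ := this n
    exact ⟨f :: δ, by simp [hlen], hpath, hlast⟩
  intro n
  induction n with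
  | zero => exact ⟨e, [], rfl, List.isChain_singleton e, rfl⟩
  | succ n ih =>
    obtain ⟨f, δ, hlen, hpath, hlast⟩ := ih
    obtain ⟨g, hg⟩ := hsrc f
    exact ⟨g, f :: δ, by simp [hlen], List.isChain_cons_cons.2 ⟨hg, hpath⟩,
      by rw [pLast_cons_cons, hlast]⟩

lemma pgen_rng_mem_mulSpan (hsrc : ∀ e₁ : E, ∃ e₂ : E, G.src e₁ ∈ G.rng e₂) {n : ℕ}
    (hn : n ≠ 0) (e : E) :
    pgen R G (G.rng e) (InG0.range e) ∈ mulSpan (zComp R G (-n)) (zComp R G n) := by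
  obtain ⟨δ, hlen, hδ, hlast⟩ := exists_isPath_pLast_eq (R := R) hsrc e (n - 1)
  have hfactor : mono R G [] (G.rng e) (InG0.range e) δ * mono R G δ (G.rng e) (InG0.range e) []
      = pgen R G (G.rng e) (InG0.range e) := by
    simp only [mono, sPath_nil, tPath_nil, one_mul, mul_one]
    rw [mul_assoc, ← mul_assoc (tPath R G δ), tPath_mul_sPath_self hδ, hlast, pgen_mul_self,
      pgen_mul_self]
  rw [← hfactor]
  exact mul_mem_mulSpan (mono_mem_zComp _ isPath_nil hδ (by simp [hlen]; omega))
    (mono_mem_zComp _ hδ isPath_nil (by simp [hlen]; omega))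

lemma pgen_union_mem_mulSpan {A B : Set V} {hA : G.InG0 A} {hB : G.InG0 B} {m m' : ℤ}
    (hA' : pgen R G A hA ∈ mulSpan (zComp R G m) (zComp R G m'))
    (hB' : pgen R G B hB ∈ mulSpan (zComp R G m) (zComp R G m')) :
    pgen R G (A ∪ B) (hA.union hB) ∈ mulSpan (zComp R G m) (zComp R G m') := by
  rw [pgen_union A B hA hB, ← pgen_mul_pgen A B hA hB]
  exact sub_mem (add_mem hA' hB') (pgen_mul_mem_mulSpan hA hB')

section FiniteEdges

variable [Finite E]

/-- `ε_{-n} = p_W` with `W` the union of all ranges, which contains every source by `hsrc`.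
Inclusion–exclusion reduces `p_W ∈ L_{-n} L_n` to `p_{r(e)} = p_{r(e)} s_δ^* s_δ p_{r(e)}` for a
path `δ` of length `n` ending in `e`. -/
lemma exists_isEpsilonUnit_neg (hsrc : ∀ e₁ : E, ∃ e₂ : E, G.src e₁ ∈ G.rng e₂)
    {n : ℕ} (hn : n ≠ 0) : ∃ ε, IsEpsilonUnit R G (-n) ε := by
  cases isEmpty_or_nonempty E
  · refine ⟨0, zero_mem _, fun t ht => ?_, fun t ht => ?_⟩ <;>
      simp_all [zComp_eq_bot]
  · have := Fintype.ofFinite E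
    obtain ⟨hW, hWmem⟩ : ∃ hW, pgen R G (Finset.univ.sup' Finset.univ_nonempty G.rng) hW ∈
        mulSpan (zComp R G (-n)) (zComp R G (-(-n))) :=
      Finset.sup'_induction (p := fun C => ∃ hC, pgen R G C hC ∈
          mulSpan (zComp R G (-n)) (zComp R G (-(-n)))) _ _ (fun A ⟨hA, hA'⟩ B ⟨hB, hB'⟩ =>
        ⟨hA.union hB, pgen_union_mem_mulSpan hA' hB'⟩)
        fun e _ => ⟨InG0.range e, by simpa using pgen_rng_mem_mulSpan hsrc hn e⟩
    have hrW : ∀ e, G.rng e ⊆ Finset.univ.sup' Finset.univ_nonempty G.rng := fun e =>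
      Finset.le_sup' G.rng (Finset.mem_univ e)
    refine ⟨_, isEpsilonUnit_pgen (by simpa using hn) hW (fun e => ?_) hrW hWmem⟩
    obtain ⟨f, hf⟩ := hsrc e
    exact hrW f hf

variable (G) in
lemma finite_setOf_isPath_length_eq (n : ℕ) : {l : List E | l.length = n ∧ G.IsPath l}.Finite :=
  (List.finite_length_eq E n).subset fun _ h => h.1

variable (G) in
noncomputable def pathsOfLength (n : ℕ) : Finset (List E) :=
  (finite_setOf_isPath_length_eq G n).toFinset

lemma mem_pathsOfLength {n : ℕ} {l : List E} :
    l ∈ pathsOfLength G n ↔ l.length = n ∧ G.IsPath l :=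
  Set.Finite.mem_toFinset _

variable (R G) in
noncomputable def pathProjSum (n : ℕ) : LPABig R G :=
  ∑ α ∈ pathsOfLength G n, sPath R G α * tPath R G α

lemma exists_append_length_eq {n : ℕ} {σ : List E} (hσ : G.IsPath σ) (hn : n ≤ σ.length) :
    ∃ σ₁ σ₂, σ = σ₁ ++ σ₂ ∧ σ₁ ∈ pathsOfLength G n :=
  ⟨σ.take n, σ.drop n, (List.take_append_drop n σ).symm,
    mem_pathsOfLength.2 ⟨List.length_take_of_le hn, hσ.take n⟩⟩

lemma pathProjSum_mul_sPath {n : ℕ} {σ : List E} (hσ : G.IsPath σ) (hn : n ≤ σ.length) :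
    pathProjSum R G n * sPath R G σ = sPath R G σ := by
  obtain ⟨σ₁, σ₂, rfl, hσ₁⟩ := exists_append_length_eq hσ hn
  obtain ⟨hlen₁, hpath₁⟩ := mem_pathsOfLength.1 hσ₁
  rw [sPath_append, pathProjSum, Finset.sum_mul, Finset.sum_eq_single_of_mem σ₁ hσ₁, mul_assoc,
    ← mul_assoc (tPath R G σ₁), tPath_mul_sPath_self hpath₁, ← mul_assoc, sPath_mul_pLast]
  intro α hα hne
  rw [mul_assoc, ← mul_assoc (tPath R G α),
    tPath_mul_sPath_of_ne ((mem_pathsOfLength.1 hα).1.trans hlen₁.symm) hpath₁ hne, zero_mul,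
    mul_zero]

lemma tPath_mul_pathProjSum {n : ℕ} {τ : List E} (hτ : G.IsPath τ) (hn : n ≤ τ.length) :
    tPath R G τ * pathProjSum R G n = tPath R G τ := by
  obtain ⟨τ₁, τ₂, rfl, hτ₁⟩ := exists_append_length_eq hτ hn
  obtain ⟨hlen₁, hpath₁⟩ := mem_pathsOfLength.1 hτ₁
  rw [tPath_append, pathProjSum, Finset.mul_sum, Finset.sum_eq_single_of_mem τ₁ hτ₁, mul_assoc,
    ← mul_assoc (tPath R G τ₁), tPath_mul_sPath_self hpath₁, pLast_mul_tPath]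
  intro α hα hne
  obtain ⟨hlen, hα⟩ := mem_pathsOfLength.1 hα
  rw [mul_assoc, ← mul_assoc (tPath R G τ₁),
    tPath_mul_sPath_of_ne (hlen₁.trans hlen.symm) hα hne.symm, zero_mul, mul_zero]

lemma pathProjSum_mem_mulSpan {n : ℕ} (hn : n ≠ 0) :
    pathProjSum R G n ∈ mulSpan (zComp R G n) (zComp R G (-n)) := by
  refine AddSubgroup.sum_mem _ fun α hα => ?_
  obtain ⟨hlen, hα⟩ := mem_pathsOfLength.1 hα
  obtain ⟨L, f, rfl⟩ := α.eq_nil_or_concat'.resolve_left (by rintro rfl; exact hn hlen.symm)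
  have hfactor : mono R G (L ++ [f]) (G.rng f) (InG0.range f) [] *
      mono R G [] (G.rng f) (InG0.range f) (L ++ [f]) =
        sPath R G (L ++ [f]) * tPath R G (L ++ [f]) := by
    simp only [mono, sPath_nil, tPath_nil, one_mul, mul_one]
    rw [mul_assoc, ← mul_assoc (pgen R G _ _), pgen_mul_self, ← pLast_concat (R := R) L f,
      ← mul_assoc, sPath_mul_pLast]
  rw [← hfactor]
  exact mul_mem_mulSpan (mono_mem_zComp _ hα isPath_nil (by simp [hlen]))
    (mono_mem_zComp _ isPath_nil hα (by simp [hlen]))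

lemma isEpsilonUnit_pathProjSum {n : ℕ} (hn : n ≠ 0) :
    IsEpsilonUnit R G n (pathProjSum R G n) := by
  refine ⟨pathProjSum_mem_mulSpan hn,
    fun t ht => mul_eq_right_of_mem_zComp (fun σ τ A hA hσ _ hd => ?_) ht,
    fun t ht => mul_eq_left_of_mem_zComp (fun σ τ A hA _ hτ hd => ?_) ht⟩
  · rw [mono, mul_assoc, ← mul_assoc, pathProjSum_mul_sPath hσ (by omega)]
  · rw [mono, mul_assoc, tPath_mul_pathProjSum hτ (by omega)]

lemma exists_isEpsilonUnit (hG0 : G.InG0 Set.univ)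
    (hsrc : ∀ e₁ : E, ∃ e₂ : E, G.src e₁ ∈ G.rng e₂) (m : ℤ) : ∃ ε, IsEpsilonUnit R G m ε := by
  obtain ⟨n, rfl | rfl⟩ := m.eq_nat_or_neg <;> rcases eq_or_ne n 0 with rfl | hn
  · exact ⟨_, isEpsilonUnit_zero hG0⟩
  · exact ⟨_, isEpsilonUnit_pathProjSum hn⟩
  · exact ⟨_, by simpa using isEpsilonUnit_zero (R := R) hG0⟩
  · exact exists_isEpsilonUnit_neg hsrc hn

end FiniteEdges

end Ultragraph

open Ultragraph in
theorem epsilonStrongZ_sufficient_general {V E : Type}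
    (G : Ultragraph V E) (R : Type) [CommRing R] [Finite E]
    (hG0 : G.InG0 Set.univ)
    (hsrc : ∀ e₁ : E, ∃ e₂ : E, G.src e₁ ∈ G.rng e₂) :
    ∃ eps : ℤ → LPABig R G, ∀ m : ℤ,
      eps m ∈ mulSpan (zComp R G m) (zComp R G (-m)) ∧
      ∀ t ∈ zComp R G m, eps m * t = t ∧ t * eps (-m) = t := by
  choose eps heps using exists_isEpsilonUnit (R := R) hG0 hsrc
  exact ⟨eps, fun m => ⟨(heps m).1, fun t ht =>
    ⟨(heps m).2.1 t ht, (heps (-m)).2.2 t (by rwa [neg_neg])⟩⟩⟩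

open Ultragraph in
/-- if `𝒢¹` is finite, `G⁰ ∈ 𝒢⁰` and the source of every edge lies in
the range of some edge, then `L_R(𝒢)` is epsilon-strongly `ℤ`-graded with respect to
the canonical grading. -/
theorem epsilonStrongZ_sufficient {V E : Type} [Countable V] [Countable E]
    (G : Ultragraph V E) (R : Type) [CommRing R] [Finite E]
    (hG0 : G.InG0 Set.univ)
    (hsrc : ∀ e₁ : E, ∃ e₂ : E, G.src e₁ ∈ G.rng e₂) :
    ∃ eps : ℤ → LPABig R G, ∀ m : ℤ,
      eps m ∈ mulSpan (zComp R G m) (zComp R G (-m)) ∧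
      ∀ t ∈ zComp R G m, eps m * t = t ∧ t * eps (-m) = t :=
  epsilonStrongZ_sufficient_general G R hG0 hsrc
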